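/- Let C be a chain component of a continuous f : X → X on a compact metric space, δ > 0, g = f|_C, and let the δ-cyclic decomposition D_0, …, D_{m−1} of C be the equivalence classes of ∼_{C,δ}, indexed so that D_i contains g^i(x) for a fixed x ∈ C. Then each D_i is open and closed in C, g(D_i) = D_{i+1 mod m}, D_m = D_0, and C is the disjoint union of D_0, …, D_{m−1}. -/

import Mathlib

/-!
A `δ`-chain in `C` from `a` to `b` has a length that is determined modulo `m`: one chain back from
`b` to `a` turns any two of them into `δ`-cycles, whose lengths `m` divides. Hence `y ∈ D i` exactly
when the chains from `x` to `y` have length `≡ i [MOD m]`; applying `f` adds one to this phase,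
points closer than `δ` have the same phase, and every point of `C` has one.

The dynamical input is that a chain component of a continuous map of a compact space is mapped
onto itself and is chain transitive through chains inside it. For the latter, compactness shows
that all points reachable from `a ∈ C` and back by fine enough chains lie in a given neighbourhood
of `C`, and uniform continuity lets such a chain be pushed into `C`.
-/

open Filter Topology Metric Set

variable {X : Type*} [MetricSpace X]

/-- There is a `δ`-chain of `f` from `x` to `y`. -/
def ChainReach (f : X → X) (δ : ℝ) (x y : X) : Prop :=
  ∃ k : ℕ, 0 < k ∧ ∃ c : ℕ → X, c 0 = x ∧ c k = y ∧
    ∀ i < k, dist (f (c i)) (c (i + 1)) ≤ δ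

/-- `x → y` : for every `δ > 0` there is a `δ`-chain from `x` to `y`. -/
def ChainTo (f : X → X) (x y : X) : Prop := ∀ δ > 0, ChainReach f δ x y

/-- The chain recurrent set. -/
def CR (f : X → X) : Set X := {x | ChainTo f x x}

/-- The relation `x ↔ y`. -/
def ChainRel (f : X → X) (x y : X) : Prop := ChainTo f x y ∧ ChainTo f y x

/-- A chain component: an equivalence class of `↔` on `CR f`. -/
def IsChainComponent (f : X → X) (C : Set X) : Prop :=
  ∃ x ∈ CR f, C = {y | y ∈ CR f ∧ ChainRel f x y}

/-- A `δ`-chain of `f` from `x` to `y` of length `k`, all of whose points lie in `S`. -/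
def ChainInLen (f : X → X) (S : Set X) (δ : ℝ) (x y : X) (k : ℕ) : Prop :=
  0 < k ∧ ∃ c : ℕ → X, (∀ i ≤ k, c i ∈ S) ∧ c 0 = x ∧ c k = y ∧
    ∀ i < k, dist (f (c i)) (c (i + 1)) ≤ δ

/-- There is a `δ`-chain from `x` to `y` inside `S`. -/
def ChainInReach (f : X → X) (S : Set X) (δ : ℝ) (x y : X) : Prop :=
  ∃ k, ChainInLen f S δ x y k

/-- `f` restricted to `S` is chain transitive. -/
def ChainTransitiveOn (f : X → X) (S : Set X) : Prop :=
  ∀ x ∈ S, ∀ y ∈ S, ∀ δ > 0, ChainInReach f S δ x y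

/-- The set of lengths of `δ`-cycles of `f` restricted to `C`. -/
def cycLengths (f : X → X) (C : Set X) (δ : ℝ) : Set ℕ :=
  {k | ∃ x ∈ C, ChainInLen f C δ x x k}

variable {f : X → X} {S : Set X} {δ δ' : ℝ} {a b c : X} {k l : ℕ}

lemma ChainInLen.mono (h : ChainInLen f S δ a b k) (hδ : δ ≤ δ') : ChainInLen f S δ' a b k := by
  obtain ⟨hk, c, hS, h0, hk', hc⟩ := h
  exact ⟨hk, c, hS, h0, hk', fun i hi => (hc i hi).trans hδ⟩

lemma ChainInLen.mem_left (h : ChainInLen f S δ a b k) : a ∈ S := by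
  obtain ⟨-, c, hS, rfl, -, -⟩ := h
  exact hS 0 (Nat.zero_le k)

lemma ChainInLen.mem_right (h : ChainInLen f S δ a b k) : b ∈ S := by
  obtain ⟨-, c, hS, -, rfl, -⟩ := h
  exact hS k le_rfl

lemma ChainInLen.trans (h₁ : ChainInLen f S δ a b k) (h₂ : ChainInLen f S δ b c l) :
    ChainInLen f S δ a c (k + l) := by
  obtain ⟨hk, p, hpS, hp0, hpk, hp⟩ := h₁
  obtain ⟨hl, q, hqS, hq0, hql, hq⟩ := h₂
  set r : ℕ → X := fun n => if n ≤ k then p n else q (n - k)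
  have hr : ∀ n, k ≤ n → r n = q (n - k) := by
    intro n hn
    rcases hn.eq_or_lt with rfl | hn
    · simp [r, hpk, hq0]
    · simp [r, hn.not_ge]
  refine ⟨by omega, r, fun i hi => ?_, by simp [r, hp0], by rw [hr _ (by omega)]; simpa, ?_⟩
  · by_cases hik : i ≤ k
    · simpa [r, hik] using hpS i hik
    · rw [hr i (by omega)]; exact hqS _ (by omega)
  · intro i hi
    by_cases hik : i < k
    · simpa [r, hik.le, Nat.succ_le_of_lt hik] using hp i hik
    · rw [hr i (by omega), hr (i + 1) (by omega), Nat.sub_add_comm (by omega)]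
      exact hq _ (by omega)

lemma ChainInLen.update_last (h : ChainInLen f S δ a b k) (hc : c ∈ S)
    (hδ : δ + dist b c ≤ δ') : ChainInLen f S δ' a c k := by
  obtain ⟨hk, p, hS, h0, hk', hp⟩ := h
  refine ⟨hk, Function.update p k c, fun i hi => ?_, ?_, by simp, fun i hi => ?_⟩
  · rcases hi.eq_or_lt with rfl | hi
    · simpa
    · rw [Function.update_of_ne hi.ne]; exact hS i hi.le
  · rw [Function.update_of_ne hk.ne, h0]
  · have hδ₀ : δ ≤ δ' := by linarith [dist_nonneg (x := b) (y := c)]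
    rw [Function.update_of_ne hi.ne]
    rcases (show i + 1 ≤ k by omega).eq_or_lt with hik | hik
    · have hstep := hp i hi
      rw [hik, hk'] at hstep
      rw [hik, Function.update_self]
      linarith [dist_triangle (f (p i)) b c]
    · rw [Function.update_of_ne hik.ne]; exact (hp i hi).trans hδ₀

lemma ChainInLen.update_first (h : ChainInLen f S δ b c k) (ha : a ∈ S)
    (hδ : dist (f a) (f b) + δ ≤ δ') : ChainInLen f S δ' a c k := by
  obtain ⟨hk, p, hS, h0, hk', hp⟩ := h
  refine ⟨hk, Function.update p 0 a, fun i hi => ?_, by simp, ?_, fun i hi => ?_⟩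
  · rcases Nat.eq_zero_or_pos i with rfl | hi₀
    · simpa
    · rw [Function.update_of_ne hi₀.ne']; exact hS i hi
  · rw [Function.update_of_ne hk.ne', hk']
  · have hδ₀ : δ ≤ δ' := by linarith [dist_nonneg (x := f a) (y := f b)]
    rw [Function.update_of_ne (Nat.succ_ne_zero i)]
    rcases Nat.eq_zero_or_pos i with rfl | hi₀
    · have hstep := hp 0 hi
      rw [h0, zero_add] at hstep
      rw [Function.update_self]
      linarith [dist_triangle (f a) (f b) (p 1)]
    · rw [Function.update_of_ne hi₀.ne']; exact (hp i hi).trans hδ₀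

lemma ChainInLen.exists_dist_apply_le (h : ChainInLen f S δ a b k) :
    ∃ w ∈ S, dist (f w) b ≤ δ := by
  obtain ⟨hk, p, hS, -, rfl, hp⟩ := h
  refine ⟨p (k - 1), hS _ (Nat.sub_le k 1), ?_⟩
  simpa [Nat.sub_add_cancel hk] using hp (k - 1) (by omega)

lemma chainInLen_iterate (hS : MapsTo f S S) (ha : a ∈ S) (hk : 0 < k) (hδ : 0 ≤ δ) :
    ChainInLen f S δ a (f^[k] a) k :=
  ⟨hk, fun i => f^[i] a, fun i _ => hS.iterate i ha, rfl, rfl,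
    fun i _ => by simpa [Function.iterate_succ_apply'] using hδ⟩

lemma chainReach_iff_chainInReach_univ : ChainReach f δ a b ↔ ChainInReach f univ δ a b := by
  constructor
  · rintro ⟨k, hk, c, h⟩
    exact ⟨k, hk, c, fun _ _ => mem_univ _, h⟩
  · rintro ⟨k, hk, c, -, h⟩
    exact ⟨k, hk, c, h⟩

lemma ChainReach.mono (h : ChainReach f δ a b) (hδ : δ ≤ δ') : ChainReach f δ' a b := by
  rw [chainReach_iff_chainInReach_univ] at h ⊢
  obtain ⟨k, h⟩ := h
  exact ⟨k, h.mono hδ⟩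

lemma ChainReach.trans (h₁ : ChainReach f δ a b) (h₂ : ChainReach f δ b c) :
    ChainReach f δ a c := by
  rw [chainReach_iff_chainInReach_univ] at h₁ h₂ ⊢
  obtain ⟨k, h₁⟩ := h₁
  obtain ⟨l, h₂⟩ := h₂
  exact ⟨k + l, h₁.trans h₂⟩

lemma chainReach_of_lt {c : ℕ → X} {i j : ℕ} (hc : ∀ n < k, dist (f (c n)) (c (n + 1)) ≤ δ)
    (hij : i < j) (hjk : j ≤ k) : ChainReach f δ (c i) (c j) :=
  ⟨j - i, by omega, fun n => c (i + n), rfl, congrArg c (by omega),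
    fun n hn => hc (i + n) (by omega)⟩

lemma ChainTo.trans (h₁ : ChainTo f a b) (h₂ : ChainTo f b c) : ChainTo f a c :=
  fun δ hδ => (h₁ δ hδ).trans (h₂ δ hδ)

lemma chainTo_self_apply (a : X) : ChainTo f a (f a) := fun _ hδ =>
  chainReach_iff_chainInReach_univ.2 ⟨1, chainInLen_iterate (mapsTo_univ f univ) (mem_univ a)
    one_pos hδ.le⟩

lemma chainReach_of_mem_closure (hb : b ∈ closure {y | ChainReach f δ a y}) (hδ : δ < δ') :
    ChainReach f δ' a b := by
  obtain ⟨y, hy, hyb⟩ := Metric.mem_closure_iff.1 hb (δ' - δ) (by linarith)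
  obtain ⟨k, hy⟩ := chainReach_iff_chainInReach_univ.1 hy
  rw [dist_comm] at hyb
  exact chainReach_iff_chainInReach_univ.2 ⟨k, hy.update_last (mem_univ b) (by linarith)⟩

lemma chainReach_of_mem_closure' (hf : Continuous f) (hb : b ∈ closure {y | ChainReach f δ y a})
    (hδ : δ < δ') : ChainReach f δ' b a := by
  obtain ⟨ρ, hρ, hfρ⟩ := Metric.continuous_iff.1 hf b (δ' - δ) (by linarith)
  obtain ⟨y, hy, hby⟩ := Metric.mem_closure_iff.1 hb ρ hρ
  obtain ⟨k, hy⟩ := chainReach_iff_chainInReach_univ.1 hy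
  have hfy := hfρ y (by rwa [dist_comm])
  rw [dist_comm] at hfy
  exact chainReach_iff_chainInReach_univ.2 ⟨k, hy.update_first (mem_univ b) (by linarith)⟩

lemma chainTo_of_forall_mem_closure (h : ∀ ε > 0, b ∈ closure {y | ChainReach f ε a y}) :
    ChainTo f a b := fun δ hδ =>
  chainReach_of_mem_closure (h (δ / 2) (by positivity)) (by linarith)

lemma chainTo_of_forall_mem_closure' (hf : Continuous f)
    (h : ∀ ε > 0, b ∈ closure {y | ChainReach f ε y a}) : ChainTo f b a := fun δ hδ =>
  chainReach_of_mem_closure' hf (h (δ / 2) (by positivity)) (by linarith)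

lemma isClosed_setOf_chainTo (a : X) : IsClosed {y | ChainTo f a y} :=
  isClosed_of_closure_subset fun _ hb =>
    chainTo_of_forall_mem_closure fun ε hε =>
      closure_mono (fun y (hy : ChainTo f a y) => hy ε hε) hb

lemma isClosed_setOf_chainTo' (hf : Continuous f) (a : X) : IsClosed {y | ChainTo f y a} :=
  isClosed_of_closure_subset fun _ hb =>
    chainTo_of_forall_mem_closure' hf fun ε hε =>
      closure_mono (fun y (hy : ChainTo f y a) => hy ε hε) hb

lemma chainTo_apply_self (hf : Continuous f) (ha : a ∈ CR f) : ChainTo f (f a) a := by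
  refine chainTo_of_forall_mem_closure' hf fun ε hε => Metric.mem_closure_iff.2 fun η hη => ?_
  obtain ⟨k, hk, c, h0, hk', hc⟩ := ha (min ε (η / 2)) (by positivity)
  have hstep := hc 0 hk
  rw [h0, zero_add] at hstep
  refine ⟨c 1, ?_, by linarith [min_le_right ε (η / 2)]⟩
  rcases (show 1 ≤ k by omega).eq_or_lt with rfl | h1
  · rw [hk']; exact ha ε hε
  · have hreach := (chainReach_of_lt hc h1 le_rfl).mono (min_le_left _ _)
    rwa [hk'] at hreach

lemma chainInLen_of_forall_mem_thickening {c : ℕ → X} {ρ η : ℝ} (hk : 0 < k)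
    (hc : ∀ i < k, dist (f (c i)) (c (i + 1)) ≤ δ) (h0 : c 0 ∈ S) (hk' : c k ∈ S)
    (hS : ∀ i ≤ k, c i ∈ thickening η S) (hf : ∀ u v, dist u v < η → dist (f u) (f v) < ρ) :
    ChainInLen f S (ρ + δ + η) (c 0) (c k) k := by
  have hproj : ∀ i ≤ k, ∃ q ∈ S, dist (c i) q < η ∧ (c i ∈ S → q = c i) := by
    intro i hi
    obtain ⟨z, hz, hdz⟩ := mem_thickening_iff.1 (hS i hi)
    by_cases hci : c i ∈ S
    · exact ⟨c i, hci, by rw [dist_self]; exact dist_nonneg.trans_lt hdz, fun _ => rfl⟩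
    · exact ⟨z, hz, hdz, fun h => absurd h hci⟩
  have : Nonempty X := ⟨c 0⟩
  choose! g hgS hgc hg using hproj
  refine ⟨hk, g, hgS, hg 0 (Nat.zero_le k) h0, hg k le_rfl hk', fun i hi => ?_⟩
  have h₁ : dist (f (g i)) (f (c i)) < ρ := hf _ _ (by rw [dist_comm]; exact hgc i hi.le)
  have h₂ : dist (c (i + 1)) (g (i + 1)) < η := hgc (i + 1) hi
  linarith [dist_triangle4 (f (g i)) (f (c i)) (c (i + 1)) (g (i + 1)), hc i hi]

variable {C U : Set X}

lemma IsChainComponent.subset_CR (hC : IsChainComponent f C) : C ⊆ CR f := by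
  obtain ⟨x₀, -, rfl⟩ := hC
  exact fun _ hp => hp.1

lemma IsChainComponent.eq_setOf (hC : IsChainComponent f C) (ha : a ∈ C) :
    C = {p | ChainTo f a p ∧ ChainTo f p a} := by
  obtain ⟨x₀, -, rfl⟩ := hC
  obtain ⟨-, hx₀a, hax₀⟩ := ha
  ext p
  constructor
  · rintro ⟨-, hx₀p, hpx₀⟩
    exact ⟨hax₀.trans hx₀p, hpx₀.trans hx₀a⟩
  · rintro ⟨hap, hpa⟩
    exact ⟨hpa.trans hap, hx₀a.trans hap, hpa.trans hax₀⟩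

lemma IsChainComponent.isClosed (hf : Continuous f) (hC : IsChainComponent f C) : IsClosed C := by
  obtain ⟨x₀, hx₀, hCeq⟩ := id hC
  have hx₀C : x₀ ∈ C := hCeq ▸ ⟨hx₀, hx₀, hx₀⟩
  rw [hC.eq_setOf hx₀C]
  exact (isClosed_setOf_chainTo x₀).inter (isClosed_setOf_chainTo' hf x₀)

lemma IsChainComponent.mapsTo (hf : Continuous f) (hC : IsChainComponent f C) :
    MapsTo f C C := fun p hp => by
  rw [hC.eq_setOf hp]
  exact ⟨chainTo_self_apply p, chainTo_apply_self hf (hC.subset_CR hp)⟩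

section Compact

variable [CompactSpace X]

lemma IsChainComponent.exists_chainReach_mem (hf : Continuous f) (hC : IsChainComponent f C)
    (ha : a ∈ C) (hU : IsOpen U) (hCU : C ⊆ U) :
    ∃ ε > 0, ∀ p, ChainReach f ε a p → ChainReach f ε p a → p ∈ U := by
  set B : Ioi (0 : ℝ) → Set X := fun ε => closure {p | ChainReach f ε a p ∧ ChainReach f ε p a}
  have hB : Uᶜ ∩ ⋂ ε, B ε = ∅ := by
    refine eq_empty_of_forall_notMem fun p ⟨hpU, hp⟩ => hpU (hCU ?_)
    have hp' : ∀ ε (hε : 0 < ε), p ∈ B ⟨ε, hε⟩ := fun ε hε => mem_iInter.1 hp ⟨ε, hε⟩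
    rw [hC.eq_setOf ha]
    exact ⟨chainTo_of_forall_mem_closure fun ε hε => closure_mono (fun _ h => h.1) (hp' ε hε),
      chainTo_of_forall_mem_closure' hf fun ε hε => closure_mono (fun _ h => h.2) (hp' ε hε)⟩
  have hBmono : Monotone B := fun ε ε' h =>
    closure_mono fun p hp => ⟨hp.1.mono h, hp.2.mono h⟩
  obtain ⟨ε, hε⟩ := hU.isClosed_compl.isCompact.elim_directed_family_closed B
    (fun _ => isClosed_closure) hB hBmono.directed_ge
  exact ⟨ε, ε.2, fun p h₁ h₂ => by_contra fun hpU =>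
    eq_empty_iff_forall_notMem.1 hε p ⟨hpU, subset_closure ⟨h₁, h₂⟩⟩⟩

lemma IsChainComponent.chainTransitiveOn (hf : Continuous f) (hC : IsChainComponent f C) :
    ChainTransitiveOn f C := by
  intro a ha b hb d hd
  obtain ⟨η₀, hη₀, hfη₀⟩ := Metric.uniformContinuous_iff.1
    (CompactSpace.uniformContinuous_of_continuous hf) (d / 3) (by positivity)
  set η := min η₀ (d / 3)
  have hfη : ∀ u v, dist u v < η → dist (f u) (f v) < d / 3 :=
    fun u v h => hfη₀ (h.trans_le (min_le_left _ _))
  obtain ⟨ε, hε, hnear⟩ := hC.exists_chainReach_mem hf ha isOpen_thickening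
    (self_subset_thickening (by positivity : 0 < η) C)
  have hab : ChainTo f a b := (hC.eq_setOf ha ▸ hb).1
  have hba : ChainTo f b a := (hC.eq_setOf ha ▸ hb).2
  obtain ⟨k, hk, c, rfl, rfl, hc⟩ := hab (min ε (d / 3)) (by positivity)
  have hcε : ∀ i < k, dist (f (c i)) (c (i + 1)) ≤ ε := fun i hi =>
    (hc i hi).trans (min_le_left _ _)
  have hthick : ∀ i ≤ k, c i ∈ thickening η C := by
    intro i hi
    by_cases hci : c i ∈ C
    · exact self_subset_thickening (by positivity) C hci
    have hi₀ : 0 < i := Nat.pos_of_ne_zero fun h => hci (h ▸ ha)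
    have hik : i < k := lt_of_le_of_ne hi fun h => hci (h ▸ hb)
    exact hnear _ (chainReach_of_lt hcε hi₀ hi)
      ((chainReach_of_lt hcε hik le_rfl).trans (hba ε hε))
  have hchain := chainInLen_of_forall_mem_thickening hk hc ha hb hthick hfη
  exact ⟨k, hchain.mono (by linarith [min_le_right ε (d / 3), min_le_right η₀ (d / 3)])⟩

lemma IsChainComponent.surjOn (hf : Continuous f) (hC : IsChainComponent f C) :
    SurjOn f C C := by
  intro z hz
  have hclosed : IsClosed (f '' C) := ((hC.isClosed hf).isCompact.image hf).isClosed
  rw [← hclosed.closure_eq, Metric.mem_closure_iff]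
  intro η hη
  obtain ⟨k, hk⟩ := hC.chainTransitiveOn hf z hz z hz (η / 2) (by positivity)
  obtain ⟨w, hw, hwz⟩ := hk.exists_dist_apply_le
  exact ⟨f w, mem_image_of_mem f hw, by rw [dist_comm]; linarith⟩

end Compact

def ChainInLenMod (f : X → X) (C : Set X) (δ : ℝ) (m : ℕ) (a b : X) (n : ℕ) : Prop :=
  ∃ k, ChainInLen f C δ a b k ∧ k ≡ n [MOD m]

/-- The piece `D i`, described by the lengths of chains from `x` rather than as the class of
`f^[i] x`. -/
def cyclicPiece (f : X → X) (C : Set X) (δ : ℝ) (m : ℕ) (x : X) (i : ℕ) : Set X :=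
  {y | y ∈ C ∧ ChainInLenMod f C δ m x y i}

section CyclicDecomposition

variable {C : Set X} {m n n' : ℕ} {x y z : X}

lemma ChainInLenMod.trans (h₁ : ChainInLenMod f C δ m a b n) (h₂ : ChainInLenMod f C δ m b c n') :
    ChainInLenMod f C δ m a c (n + n') := by
  obtain ⟨k, hk, hkn⟩ := h₁
  obtain ⟨l, hl, hln⟩ := h₂
  exact ⟨k + l, hk.trans hl, hkn.add hln⟩

lemma ChainInLenMod.of_modEq (h : ChainInLenMod f C δ m a b n) (hn : n ≡ n' [MOD m]) :
    ChainInLenMod f C δ m a b n' := by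
  obtain ⟨k, hk, hkn⟩ := h
  exact ⟨k, hk, hkn.trans hn⟩

lemma exists_chainInLenMod (hT : ChainTransitiveOn f C) (hδ : 0 < δ) (ha : a ∈ C) (hb : b ∈ C) :
    ∃ n, ChainInLenMod f C δ m a b n := by
  obtain ⟨k, hk⟩ := hT a ha b hb δ hδ
  exact ⟨k, k, hk, rfl⟩

lemma chainInLenMod_self (hT : ChainTransitiveOn f C) (hδ : 0 < δ)
    (hcyc : ∀ k ∈ cycLengths f C δ, m ∣ k) (ha : a ∈ C) : ChainInLenMod f C δ m a a 0 := by
  obtain ⟨k, hk⟩ := hT a ha a ha δ hδ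
  exact ⟨k, hk, Nat.modEq_zero_iff_dvd.2 (hcyc k ⟨a, ha, hk⟩)⟩

lemma ChainInLenMod.modEq (hT : ChainTransitiveOn f C) (hδ : 0 < δ)
    (hcyc : ∀ k ∈ cycLengths f C δ, m ∣ k) (h : ChainInLenMod f C δ m a b n)
    (h' : ChainInLenMod f C δ m a b n') : n ≡ n' [MOD m] := by
  obtain ⟨k, hk, hkn⟩ := h
  obtain ⟨k', hk', hkn'⟩ := h'
  obtain ⟨l, hl⟩ := hT b hk.mem_right a hk.mem_left δ hδ
  have hcycle : ∀ {j}, ChainInLen f C δ a b j → j + l ≡ 0 [MOD m] := fun hj =>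
    Nat.modEq_zero_iff_dvd.2 (hcyc _ ⟨a, hk.mem_left, hj.trans hl⟩)
  exact hkn.symm.trans
    ((Nat.ModEq.add_right_cancel' l ((hcycle hk).trans (hcycle hk').symm)).trans hkn')

lemma chainInLenMod_iterate (hT : ChainTransitiveOn f C) (hδ : 0 < δ)
    (hcyc : ∀ k ∈ cycLengths f C δ, m ∣ k) (hmaps : MapsTo f C C) (ha : a ∈ C) :
    ∀ n, ChainInLenMod f C δ m a (f^[n] a) n
  | 0 => chainInLenMod_self hT hδ hcyc ha
  | n + 1 => ⟨n + 1, chainInLen_iterate hmaps ha n.succ_pos hδ.le, rfl⟩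

lemma chainInLenMod_zero_of_dist_lt (hT : ChainTransitiveOn f C)
    (hcyc : ∀ k ∈ cycLengths f C δ, m ∣ k) (hy : y ∈ C) (hz : z ∈ C) (hyz : dist y z < δ) :
    ChainInLenMod f C δ m y z 0 := by
  obtain ⟨k, hk⟩ := hT y hy y hy (δ - dist y z) (by linarith)
  have hcycle : ChainInLen f C δ y y k := hk.mono (by linarith [dist_nonneg (x := y) (y := z)])
  exact ⟨k, hk.update_last hz (by linarith), Nat.modEq_zero_iff_dvd.2 (hcyc k ⟨y, hy, hcycle⟩)⟩

lemma setOf_chainInLenMod_iterate_eq (hT : ChainTransitiveOn f C) (hδ : 0 < δ)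
    (hcyc : ∀ k ∈ cycLengths f C δ, m ∣ k) (hmaps : MapsTo f C C) (hx : x ∈ C) (i : ℕ) :
    {y | y ∈ C ∧ ChainInLenMod f C δ m (f^[i] x) y 0} = cyclicPiece f C δ m x i := by
  have hxi := chainInLenMod_iterate hT hδ hcyc hmaps hx i
  ext y
  refine and_congr_right fun _ => ⟨fun h => hxi.trans h, fun h => ?_⟩
  obtain ⟨n, hn⟩ := exists_chainInLenMod hT hδ (hmaps.iterate i hx) hx
  have hin : i + n ≡ 0 [MOD m] :=
    (hxi.trans hn).modEq hT hδ hcyc (chainInLenMod_self hT hδ hcyc hx)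
  exact (hn.trans h).of_modEq (by rw [add_comm]; exact hin)

lemma cyclicPiece_mod (i : ℕ) : cyclicPiece f C δ m x (i % m) = cyclicPiece f C δ m x i := by
  ext y
  exact and_congr_right fun _ =>
    ⟨fun h => h.of_modEq (Nat.mod_modEq i m), fun h => h.of_modEq (Nat.mod_modEq i m).symm⟩

lemma image_cyclicPiece (hT : ChainTransitiveOn f C) (hδ : 0 < δ)
    (hcyc : ∀ k ∈ cycLengths f C δ, m ∣ k) (hmaps : MapsTo f C C) (hsurj : SurjOn f C C)
    (hx : x ∈ C) (i : ℕ) : f '' cyclicPiece f C δ m x i = cyclicPiece f C δ m x (i + 1) := by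
  have hstep : ∀ {j y}, y ∈ cyclicPiece f C δ m x j → f y ∈ cyclicPiece f C δ m x (j + 1) :=
    fun ⟨hy, h⟩ => ⟨hmaps hy, h.trans (chainInLenMod_iterate hT hδ hcyc hmaps hy 1)⟩
  refine Subset.antisymm (image_subset_iff.2 fun y hy => hstep hy) fun z ⟨hz, hxz⟩ => ?_
  obtain ⟨w, hw, rfl⟩ := hsurj hz
  obtain ⟨n, hn⟩ := exists_chainInLenMod hT hδ hx hw
  have hni : n + 1 ≡ i + 1 [MOD m] := (hstep ⟨hw, hn⟩).2.modEq hT hδ hcyc hxz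
  exact ⟨w, ⟨hw, hn.of_modEq (Nat.ModEq.add_right_cancel' 1 hni)⟩, rfl⟩

lemma biUnion_range_cyclicPiece (hT : ChainTransitiveOn f C) (hδ : 0 < δ) (hm : 0 < m)
    (hx : x ∈ C) : ⋃ i ∈ Finset.range m, cyclicPiece f C δ m x i = C := by
  refine Subset.antisymm (iUnion₂_subset fun i _ y hy => hy.1) fun y hy => ?_
  obtain ⟨n, hn⟩ := exists_chainInLenMod hT hδ hx hy
  exact mem_iUnion₂.2 ⟨n % m, Finset.mem_range.2 (Nat.mod_lt n hm), hy,
    hn.of_modEq (Nat.mod_modEq n m).symm⟩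

lemma disjoint_cyclicPiece (hT : ChainTransitiveOn f C) (hδ : 0 < δ)
    (hcyc : ∀ k ∈ cycLengths f C δ, m ∣ k) {i j : ℕ} (hi : i < m) (hj : j < m) (hij : i ≠ j) :
    Disjoint (cyclicPiece f C δ m x i) (cyclicPiece f C δ m x j) :=
  disjoint_left.2 fun _ ⟨_, hyi⟩ ⟨_, hyj⟩ =>
    hij ((hyi.modEq hT hδ hcyc hyj).eq_of_lt_of_lt hi hj)

lemma isClopen_of_forall_dist_lt {Y : Type*} [PseudoMetricSpace Y] {s : Set Y} {ε : ℝ}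
    (hε : 0 < ε) (h : ∀ y z, dist y z < ε → y ∈ s → z ∈ s) : IsClopen s := by
  have hopen : ∀ t : Set Y, (∀ y z, dist y z < ε → y ∈ t → z ∈ t) → IsOpen t := fun t ht =>
    Metric.isOpen_iff.2 fun y hy =>
      ⟨ε, hε, fun z hz => ht y z (by rwa [mem_ball, dist_comm] at hz) hy⟩
  exact ⟨isOpen_compl_iff.1 (hopen sᶜ fun y z hyz hy hz => hy (h z y (by rwa [dist_comm]) hz)),
    hopen s h⟩

lemma isClopen_cyclicPiece (hT : ChainTransitiveOn f C) (hδ : 0 < δ)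
    (hcyc : ∀ k ∈ cycLengths f C δ, m ∣ k) (i : ℕ) :
    IsClopen {y : C | (y : X) ∈ cyclicPiece f C δ m x i} :=
  isClopen_of_forall_dist_lt hδ fun y z hyz ⟨_, hy⟩ =>
    ⟨z.2, hy.trans (chainInLenMod_zero_of_dist_lt hT hcyc y.2 z.2 hyz)⟩

end CyclicDecomposition

theorem stmt8_general {X : Type*} [MetricSpace X] [CompactSpace X]
    (f : X → X) (hf : Continuous f) (C : Set X) (hC : IsChainComponent f C)
    (δ : ℝ) (hδ : 0 < δ) (m : ℕ) (hm : 0 < m)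
    (hm1 : ∀ k ∈ cycLengths f C δ, m ∣ k)
    (rel : X → X → Prop)
    (hrel : ∀ x y, rel x y ↔ ∃ k, m ∣ k ∧ ChainInLen f C δ x y k)
    (x : X) (hx : x ∈ C) (D : ℕ → Set X)
    (hD : ∀ i, D i = {y | y ∈ C ∧ rel (f^[i] x) y}) :
    (∀ i, IsOpen {y : C | (y : X) ∈ D i} ∧ IsClosed {y : C | (y : X) ∈ D i}) ∧
    (∀ i, f '' D i = D ((i + 1) % m)) ∧
    D m = D 0 ∧
    C = ⋃ i ∈ Finset.range m, D i ∧
    (∀ i < m, ∀ j < m, i ≠ j → Disjoint (D i) (D j)) := by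
  have hT := hC.chainTransitiveOn hf
  have hmaps := hC.mapsTo hf
  have hrel' : rel = fun a b => ChainInLenMod f C δ m a b 0 := by
    ext a b
    rw [hrel]
    exact ⟨fun ⟨k, hmk, hk⟩ => ⟨k, hk, Nat.modEq_zero_iff_dvd.2 hmk⟩,
      fun ⟨k, hk, hkm⟩ => ⟨k, Nat.modEq_zero_iff_dvd.1 hkm, hk⟩⟩
  obtain rfl : D = cyclicPiece f C δ m x := funext fun i => by
    rw [hD, hrel', setOf_chainInLenMod_iterate_eq hT hδ hm1 hmaps hx]
  refine ⟨fun i => ⟨(isClopen_cyclicPiece hT hδ hm1 i).isOpen,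
      (isClopen_cyclicPiece hT hδ hm1 i).isClosed⟩, fun i => ?_, ?_,
    (biUnion_range_cyclicPiece hT hδ hm hx).symm,
    fun i hi j hj => disjoint_cyclicPiece hT hδ hm1 hi hj⟩
  · rw [image_cyclicPiece hT hδ hm1 hmaps (hC.surjOn hf) hx, cyclicPiece_mod]
  · rw [← cyclicPiece_mod, Nat.mod_self]

/-- The `δ`-cyclic decomposition: the classes `D i` of `∼_{C,δ}` are open and
closed in `C`, are cyclically permuted by `f`, satisfy `D m = D 0`, and
partition `C`. -/
theorem stmt8 {X : Type*} [MetricSpace X] [CompactSpace X]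
    (f : X → X) (hf : Continuous f) (C : Set X) (hC : IsChainComponent f C)
    (δ : ℝ) (hδ : 0 < δ) (m : ℕ) (hm : 0 < m)
    (hm1 : ∀ k ∈ cycLengths f C δ, m ∣ k)
    (hm2 : ∀ d : ℕ, (∀ k ∈ cycLengths f C δ, d ∣ k) → d ∣ m)
    (rel : X → X → Prop)
    (hrel : ∀ x y, rel x y ↔ ∃ k, m ∣ k ∧ ChainInLen f C δ x y k)
    (x : X) (hx : x ∈ C) (D : ℕ → Set X)
    (hD : ∀ i, D i = {y | y ∈ C ∧ rel (f^[i] x) y}) :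
    (∀ i, IsOpen {y : C | (y : X) ∈ D i} ∧ IsClosed {y : C | (y : X) ∈ D i}) ∧
    (∀ i, f '' D i = D ((i + 1) % m)) ∧
    D m = D 0 ∧
    C = ⋃ i ∈ Finset.range m, D i ∧
    (∀ i < m, ∀ j < m, i ≠ j → Disjoint (D i) (D j)) :=
  stmt8_general f hf C hC δ hδ m hm hm1 rel hrel x hx D hD
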